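/- Let ω ∈ ℝⁿ with 1_nᵀω = 0 satisfy the synchronization test ‖BᵀL†ω‖∞ < h(‖P_cyc‖∞); let y ≥ 0 be the unique number with h(y) = ‖BᵀL†ω‖∞ and set γ* = arccos(y/(y+1)) ∈ [0, π/2). Then there exists a unique x* ∈ ℝⁿ with 1_nᵀx* = 0 and ‖Bᵀx*‖∞ ≤ γ* satisfying the synchronization equation ω = B𝒜 sin(Bᵀx*). -/

import Mathlib

open Matrix Filter Topology

/-- The scalar function `h(x) = (x+1)·√(1 − (x/(x+1))²) − x·arccos(x/(x+1))`. -/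
noncomputable def hfun (x : ℝ) : ℝ :=
  (x + 1) * Real.sqrt (1 - (x / (x + 1)) ^ 2) - x * Real.arccos (x / (x + 1))

/-- Induced `∞`-norm of a square matrix: maximum absolute row sum. -/
noncomputable def matInfNorm {m : ℕ} (P : Matrix (Fin m) (Fin m) ℝ) : ℝ :=
  ⨆ i, ∑ j, |P i j|

/-!
Writing `ψ = Bᵀx`, the synchronization equation for zero-mean `x` is equivalent to the
fixed-point equation `ψ = P_cut (ψ - sin ψ) + BᵀL†ω`: `P_cut` is the identity on the range of
`Bᵀ`, and `L L†` is the identity on zero-mean vectors. With `cos γ* = y / (y + 1)`, the map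
`t ↦ t - sin t` is `(1 - cos γ*)`-Lipschitz on `[-γ*, γ*]` and bounded there by `γ* - sin γ*`,
while `‖P_cut‖∞ ≤ 1 + ‖P_cyc‖∞`. The identity `h(y) = (y + 1) sin γ* - y γ*` makes the closed
ball of radius `γ*` invariant, and the Lipschitz constant `(1 + ‖P_cyc‖∞) / (y + 1)` is less than
one because, `h` being decreasing, the test forces `‖P_cyc‖∞ < y`. Banach's fixed-point theorem
on that ball gives existence and uniqueness.
-/

lemma hfun_eq_sin_arccos : hfun = fun x =>
    (x + 1) * Real.sin (Real.arccos (x / (x + 1))) - x * Real.arccos (x / (x + 1)) := by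
  funext x
  rw [hfun, Real.sin_arccos]

lemma hasDerivAt_hfun {x : ℝ} (hx : 0 ≤ x) :
    HasDerivAt hfun (Real.sin (Real.arccos (x / (x + 1))) - Real.arccos (x / (x + 1))) x := by
  have hx1 : x + 1 ≠ 0 := by positivity
  set u := x / (x + 1)
  have hu1 : u < 1 := by rw [div_lt_one (by positivity)]; linarith
  have hum1 : -1 < u := by linarith [show 0 ≤ u by positivity]
  have hu : HasDerivAt (fun t : ℝ => t / (t + 1)) (1 / (x + 1) ^ 2) x :=
    ((hasDerivAt_id' x).div ((hasDerivAt_id' x).add_const 1) hx1).congr_deriv (by ring)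
  obtain ⟨A', hA⟩ : ∃ A', HasDerivAt (fun t : ℝ => Real.arccos (t / (t + 1))) A' x :=
    ⟨_, by have := (Real.hasDerivAt_arccos hum1.ne' hu1.ne).comp x hu; exact this⟩
  -- the two `A'` terms cancel because `(x + 1) * cos (arccos u) = x`
  have hcos : (x + 1) * Real.cos (Real.arccos u) = x := by
    rw [Real.cos_arccos hum1.le hu1.le, mul_div_cancel₀ x hx1]
  rw [hfun_eq_sin_arccos]
  refine ((((hasDerivAt_id' x).add_const 1).mul hA.sin).sub
    ((hasDerivAt_id' x).mul hA)).congr_deriv ?_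
  linear_combination A' * hcos

lemma hfun_strictAntiOn : StrictAntiOn hfun (Set.Ici 0) := by
  refine strictAntiOn_of_hasDerivWithinAt_neg (convex_Ici 0)
    (fun x hx => (hasDerivAt_hfun hx).continuousAt.continuousWithinAt)
    (fun x hx => (hasDerivAt_hfun (interior_subset hx : (0:ℝ) ≤ x)).hasDerivWithinAt) ?_
  intro x hx
  rw [interior_Ici] at hx
  have hu1 : x / (x + 1) < 1 := by rw [div_lt_one (by linarith [hx.out])]; linarith
  linarith [Real.sin_lt (Real.arccos_pos.2 hu1)]

lemma monotone_sub_sin : Monotone fun t : ℝ => t - Real.sin t :=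
  monotone_of_hasDerivAt_nonneg (fun t => (hasDerivAt_id' t).sub (Real.hasDerivAt_sin t))
    fun t => sub_nonneg.2 (Real.cos_le_one t)

lemma abs_sub_sin (t : ℝ) : |t - Real.sin t| = |t| - Real.sin |t| := by
  rcases le_total 0 t with ht | ht
  · rw [abs_of_nonneg ht, abs_of_nonneg (by linarith [Real.sin_le ht])]
  · have hsin := Real.sin_le (neg_nonneg.2 ht)
    rw [Real.sin_neg] at hsin
    rw [abs_of_nonpos ht, abs_of_nonpos (by linarith), Real.sin_neg]
    ring

lemma abs_sub_sin_le {t γ : ℝ} (ht : |t| ≤ γ) : |t - Real.sin t| ≤ γ - Real.sin γ :=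
  abs_sub_sin t ▸ monotone_sub_sin ht

lemma abs_sub_sin_sub_sub_sin_le {s t γ : ℝ} (hγ : γ ≤ Real.pi) (hs : |s| ≤ γ) (ht : |t| ≤ γ) :
    |(s - Real.sin s) - (t - Real.sin t)| ≤ (1 - Real.cos γ) * |s - t| := by
  refine (convex_Icc (-γ) γ).norm_image_sub_le_of_norm_hasDerivWithin_le
    (fun x _ => ((hasDerivAt_id x).sub (Real.hasDerivAt_sin x)).hasDerivWithinAt) (fun x hx => ?_)
    (abs_le.1 ht) (abs_le.1 hs)
  have hcos : Real.cos γ ≤ Real.cos x := by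
    rw [← Real.cos_abs x]
    exact Real.cos_le_cos_of_nonneg_of_le_pi (abs_nonneg x) hγ (abs_le.2 hx)
  rw [Real.norm_eq_abs, abs_of_nonneg (by linarith [Real.cos_le_one x])]
  linarith

section SubSin

variable {E : Type*} [Fintype E]

lemma norm_sub_sin_le {ψ : E → ℝ} {γ : ℝ} (hγ : 0 ≤ γ) (hψ : ‖ψ‖ ≤ γ) :
    ‖ψ - fun e => Real.sin (ψ e)‖ ≤ γ - Real.sin γ :=
  (pi_norm_le_iff_of_nonneg (by linarith [Real.sin_le hγ])).2 fun e =>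
    abs_sub_sin_le ((norm_le_pi_norm ψ e).trans hψ)

lemma norm_sub_sin_sub_sub_sin_le {ψ φ : E → ℝ} {γ : ℝ} (hγ : γ ≤ Real.pi) (hψ : ‖ψ‖ ≤ γ)
    (hφ : ‖φ‖ ≤ γ) :
    ‖(ψ - fun e => Real.sin (ψ e)) - (φ - fun e => Real.sin (φ e))‖
      ≤ (1 - Real.cos γ) * ‖ψ - φ‖ := by
  have hcos : 0 ≤ 1 - Real.cos γ := by linarith [Real.cos_le_one γ]
  refine (pi_norm_le_iff_of_nonneg (by positivity)).2 fun e => ?_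
  calc |(ψ e - Real.sin (ψ e)) - (φ e - Real.sin (φ e))|
      ≤ (1 - Real.cos γ) * |ψ e - φ e| :=
        abs_sub_sin_sub_sub_sin_le hγ ((norm_le_pi_norm ψ e).trans hψ)
          ((norm_le_pi_norm φ e).trans hφ)
    _ ≤ (1 - Real.cos γ) * ‖ψ - φ‖ :=
        mul_le_mul_of_nonneg_left (norm_le_pi_norm (ψ - φ) e) hcos

end SubSin

section Incidence

variable {V E : Type*} [Fintype V] {B : Matrix V E ℝ}

lemma eq_of_transpose_mulVec_eq (hconn : ∀ x : V → ℝ, Bᵀ *ᵥ x = 0 ↔ ∃ c : ℝ, x = fun _ => c)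
    {x x' : V → ℝ} (hx : ∑ i, x i = 0) (hx' : ∑ i, x' i = 0) (h : Bᵀ *ᵥ x = Bᵀ *ᵥ x') :
    x = x' := by
  obtain ⟨c, hc⟩ := (hconn (x - x')).1 (by rw [mulVec_sub, h, sub_self])
  have hsum : ∑ i, (x - x') i = 0 := by simp [Finset.sum_sub_distrib, hx, hx']
  rw [hc, Finset.sum_const, Finset.card_univ, nsmul_eq_mul, mul_eq_zero] at hsum
  funext i
  have : Nonempty V := ⟨i⟩
  have hc0 : c = 0 := hsum.resolve_left (Nat.cast_ne_zero.2 Fintype.card_ne_zero)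
  simpa [hc0, sub_eq_zero] using congrFun hc i

lemma exists_sum_eq_zero_transpose_mulVec_eq
    (hconn : ∀ x : V → ℝ, Bᵀ *ᵥ x = 0 ↔ ∃ c : ℝ, x = fun _ => c) (v : V → ℝ) :
    ∃ x : V → ℝ, ∑ i, x i = 0 ∧ Bᵀ *ᵥ x = Bᵀ *ᵥ v := by
  set μ := (∑ i, v i) / Fintype.card V
  refine ⟨v - fun _ => μ, ?_, by rw [mulVec_sub, (hconn _).2 ⟨μ, rfl⟩, sub_zero]⟩
  rcases isEmpty_or_nonempty V with hV | hV
  · simp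
  · simp only [Pi.sub_apply, Finset.sum_sub_distrib, Finset.sum_const, Finset.card_univ,
      nsmul_eq_mul, μ]
    rw [mul_div_cancel₀ _ (Nat.cast_ne_zero.2 Fintype.card_ne_zero), sub_self]

variable [Fintype E]

lemma sum_mulVec_eq_zero (hconn : ∀ x : V → ℝ, Bᵀ *ᵥ x = 0 ↔ ∃ c : ℝ, x = fun _ => c)
    (v : E → ℝ) : ∑ i, (B *ᵥ v) i = 0 := by
  rw [← one_dotProduct, dotProduct_mulVec, ← mulVec_transpose, (hconn 1).2 ⟨1, rfl⟩,
    zero_dotProduct]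

variable [DecidableEq E] {a : E → ℝ} {M : Matrix V V ℝ}

lemma transpose_mulVec_eq_zero_of_mulVec_eq_zero (ha : ∀ e, 0 < a e) {v : V → ℝ}
    (hv : (B * diagonal a * Bᵀ) *ᵥ v = 0) : Bᵀ *ᵥ v = 0 := by
  set w := Bᵀ *ᵥ v
  have hquad : ∑ e, a e * w e ^ 2 = 0 := by
    have := congrArg (v ⬝ᵥ ·) hv
    simp only [dotProduct_zero] at this
    rw [← mulVec_mulVec, ← mulVec_mulVec, dotProduct_mulVec, ← mulVec_transpose] at this
    rw [← this, dotProduct]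
    simp only [mulVec_diagonal, w]
    exact Finset.sum_congr rfl fun e _ => by ring
  funext e
  have hterm := (Finset.sum_eq_zero_iff_of_nonneg fun e _ =>
    mul_nonneg (ha e).le (sq_nonneg (w e))).1 hquad e (Finset.mem_univ e)
  simpa [(ha e).ne'] using hterm

lemma cutProjection_mul_transpose (ha : ∀ e, 0 < a e)
    (hM1 : (B * diagonal a * Bᵀ) * M * (B * diagonal a * Bᵀ) = B * diagonal a * Bᵀ) :
    Bᵀ * M * (B * diagonal a) * Bᵀ = Bᵀ := by
  refine ext_iff_mulVec.2 fun x => ?_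
  have h : Bᵀ *ᵥ (M *ᵥ ((B * diagonal a * Bᵀ) *ᵥ x) - x) = 0 :=
    transpose_mulVec_eq_zero_of_mulVec_eq_zero ha <| by
      rw [mulVec_sub, mulVec_mulVec, mulVec_mulVec, hM1, sub_self]
  rw [mulVec_sub, sub_eq_zero] at h
  simpa only [← mulVec_mulVec] using h

lemma exists_laplacian_mulVec_eq (hconn : ∀ x : V → ℝ, Bᵀ *ᵥ x = 0 ↔ ∃ c : ℝ, x = fun _ => c)
    (ha : ∀ e, 0 < a e) {w : V → ℝ} (hw : ∑ i, w i = 0) :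
    ∃ z, (B * diagonal a * Bᵀ) *ᵥ z = w := by
  let U := LinearMap.ker (dotProductBilin ℝ ℝ (1 : V → ℝ))
  have hU : ∀ x, x ∈ U ↔ ∑ i, x i = 0 := by simp [U, one_dotProduct]
  have hLU : ∀ x ∈ U, (B * diagonal a * Bᵀ).mulVecLin x ∈ U := fun x _ => (hU _).2 <| by
    rw [mulVecLin_apply, Matrix.mul_assoc, ← mulVec_mulVec]
    exact sum_mulVec_eq_zero hconn _
  have hinj : Function.Injective ((B * diagonal a * Bᵀ).mulVecLin.restrict hLU) := by
    refine fun z z' hzz' => Subtype.ext <| eq_of_transpose_mulVec_eq hconn ((hU _).1 z.2)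
      ((hU _).1 z'.2) <| sub_eq_zero.1 ?_
    rw [← mulVec_sub]
    refine transpose_mulVec_eq_zero_of_mulVec_eq_zero ha ?_
    rw [mulVec_sub, sub_eq_zero]
    exact congrArg Subtype.val hzz'
  obtain ⟨z, hz⟩ := LinearMap.injective_iff_surjective.1 hinj ⟨w, (hU w).2 hw⟩
  exact ⟨z, congrArg Subtype.val hz⟩

end Incidence

section MatInfNorm

attribute [local instance] Matrix.linftyOpNormedAddCommGroup

lemma matInfNorm_eq_linfty_opNorm {m : ℕ} (P : Matrix (Fin m) (Fin m) ℝ) :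
    matInfNorm P = ‖P‖ := by
  simp [matInfNorm, Matrix.linfty_opNorm_def, Finset.sup_univ_eq_ciSup, NNReal.coe_iSup]

lemma matInfNorm_nonneg {m : ℕ} (P : Matrix (Fin m) (Fin m) ℝ) : 0 ≤ matInfNorm P :=
  matInfNorm_eq_linfty_opNorm P ▸ norm_nonneg P

lemma norm_mulVec_le_one_add_matInfNorm_sub {m : ℕ} (P : Matrix (Fin m) (Fin m) ℝ)
    (v : Fin m → ℝ) : ‖P *ᵥ v‖ ≤ (1 + matInfNorm (1 - P)) * ‖v‖ := by
  have hPv : P *ᵥ v = v - (1 - P) *ᵥ v := by simp [sub_mulVec]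
  rw [hPv, matInfNorm_eq_linfty_opNorm]
  calc ‖v - (1 - P) *ᵥ v‖ ≤ ‖v‖ + ‖(1 - P) *ᵥ v‖ := norm_sub_le _ _
    _ ≤ ‖v‖ + ‖1 - P‖ * ‖v‖ := by gcongr; exact linfty_opNorm_mulVec _ _
    _ = (1 + ‖1 - P‖) * ‖v‖ := by ring

end MatInfNorm

lemma existsUnique_isFixedPt_of_lipschitzOnWith {α : Type*} [MetricSpace α] {s : Set α}
    {T : α → α} {K : NNReal} (hK : K < 1) (hsc : IsComplete s) (hs : s.Nonempty)
    (hsT : Set.MapsTo T s s) (hT : LipschitzOnWith K T s) :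
    ∃! x, x ∈ s ∧ Function.IsFixedPt T x := by
  have hcontr : ContractingWith K (hsT.restrict T s s) := ⟨hK, hT.mapsToRestrict hsT⟩
  obtain ⟨x₀, hx₀⟩ := hs
  obtain ⟨x, hxs, hx, -⟩ := hcontr.exists_fixedPoint' hsc hsT hx₀ (edist_ne_top _ _)
  refine ⟨x, ⟨hxs, hx⟩, fun y ⟨hys, hy⟩ => ?_⟩
  exact congrArg Subtype.val
    (hcontr.fixedPoint_unique' (x := ⟨y, hys⟩) (y := ⟨x, hxs⟩) (Subtype.ext hy) (Subtype.ext hx))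

noncomputable def syncMap {E : Type*} [Fintype E] (P : Matrix E E ℝ) (b ψ : E → ℝ) : E → ℝ :=
  P *ᵥ (ψ - fun e => Real.sin (ψ e)) + b

section SyncMap

variable {m : ℕ} (P : Matrix (Fin m) (Fin m) ℝ) (b : Fin m → ℝ) {y : ℝ}

lemma mapsTo_syncMap (hρy : matInfNorm (1 - P) ≤ y) (hb : ‖b‖ ≤ hfun y) :
    Set.MapsTo (syncMap P b) (Metric.closedBall 0 (Real.arccos (y / (y + 1))))
      (Metric.closedBall 0 (Real.arccos (y / (y + 1)))) := by
  intro ψ hψ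
  rw [mem_closedBall_zero_iff] at hψ ⊢
  set γ := Real.arccos (y / (y + 1))
  set ρ := matInfNorm (1 - P)
  have hγ : 0 ≤ γ := Real.arccos_nonneg _
  have hhfun : hfun y = (y + 1) * Real.sin γ - y * γ := by rw [hfun_eq_sin_arccos]
  calc ‖syncMap P b ψ‖ ≤ (1 + ρ) * (γ - Real.sin γ) + hfun y :=
        (norm_add_le _ _).trans <| add_le_add ((norm_mulVec_le_one_add_matInfNorm_sub P _).trans <|
          mul_le_mul_of_nonneg_left (norm_sub_sin_le hγ hψ)
            (by linarith [matInfNorm_nonneg (1 - P)])) hb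
    _ = γ - (y - ρ) * (γ - Real.sin γ) := by rw [hhfun]; ring
    _ ≤ γ := sub_le_self _ (mul_nonneg (sub_nonneg.2 hρy) (sub_nonneg.2 (Real.sin_le hγ)))

lemma lipschitzOnWith_syncMap (hy : 0 ≤ y) :
    LipschitzOnWith (Real.toNNReal ((1 + matInfNorm (1 - P)) / (y + 1))) (syncMap P b)
      (Metric.closedBall 0 (Real.arccos (y / (y + 1)))) := by
  refine LipschitzOnWith.of_dist_le' fun ψ hψ φ hφ => ?_
  rw [mem_closedBall_zero_iff] at hψ hφ
  have hcos : 1 - Real.cos (Real.arccos (y / (y + 1))) = 1 / (y + 1) := by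
    rw [Real.cos_arccos (by linarith [show 0 ≤ y / (y + 1) by positivity])
      ((div_le_one (by positivity)).2 (by linarith))]
    field_simp
    ring
  rw [dist_eq_norm, dist_eq_norm, syncMap, syncMap, add_sub_add_right_eq_sub, ← mulVec_sub]
  calc _ ≤ (1 + matInfNorm (1 - P)) * ((1 - Real.cos (Real.arccos (y / (y + 1)))) * ‖ψ - φ‖) :=
        (norm_mulVec_le_one_add_matInfNorm_sub P _).trans <| mul_le_mul_of_nonneg_left
          (norm_sub_sin_sub_sub_sin_le (Real.arccos_le_pi _) hψ hφ)
          (by linarith [matInfNorm_nonneg (1 - P)])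
    _ = _ := by rw [hcos]; ring

theorem existsUnique_isFixedPt_syncMap (hρy : matInfNorm (1 - P) < y) (hb : ‖b‖ ≤ hfun y) :
    ∃! ψ, ψ ∈ Metric.closedBall 0 (Real.arccos (y / (y + 1))) ∧
      Function.IsFixedPt (syncMap P b) ψ := by
  have hy : 0 < y := (matInfNorm_nonneg _).trans_lt hρy
  refine existsUnique_isFixedPt_of_lipschitzOnWith ?_ Metric.isClosed_closedBall.isComplete
    ⟨0, Metric.mem_closedBall_self (Real.arccos_nonneg _)⟩ (mapsTo_syncMap P b hρy.le hb)
    (lipschitzOnWith_syncMap P b hy.le)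
  rw [← NNReal.coe_lt_coe, Real.coe_toNNReal _ (by have := matInfNorm_nonneg (1 - P); positivity),
    NNReal.coe_one, div_lt_one (by linarith)]
  linarith

end SyncMap

section FixedPoints

variable {V E : Type*} [Fintype V] [Fintype E] [DecidableEq E] {B : Matrix V E ℝ}
  {a : E → ℝ} {M : Matrix V V ℝ} {ω : V → ℝ}

lemma exists_sum_eq_zero_of_isFixedPt_syncMap
    (hconn : ∀ x : V → ℝ, Bᵀ *ᵥ x = 0 ↔ ∃ c : ℝ, x = fun _ => c) {ψ : E → ℝ}
    (hψ : Function.IsFixedPt (syncMap (Bᵀ * M * (B * diagonal a)) (Bᵀ *ᵥ (M *ᵥ ω))) ψ) :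
    ∃ x : V → ℝ, ∑ i, x i = 0 ∧ Bᵀ *ᵥ x = ψ := by
  obtain ⟨x, hx, hBx⟩ := exists_sum_eq_zero_transpose_mulVec_eq hconn
    (M *ᵥ ((B * diagonal a) *ᵥ (ψ - fun e => Real.sin (ψ e)) + ω))
  refine ⟨x, hx, hBx.trans (Eq.trans ?_ hψ)⟩
  simp only [syncMap, mulVec_add, ← mulVec_mulVec]

lemma isFixedPt_syncMap_iff (hconn : ∀ x : V → ℝ, Bᵀ *ᵥ x = 0 ↔ ∃ c : ℝ, x = fun _ => c)
    (ha : ∀ e, 0 < a e)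
    (hM1 : (B * diagonal a * Bᵀ) * M * (B * diagonal a * Bᵀ) = B * diagonal a * Bᵀ)
    (hω : ∑ i, ω i = 0) (x : V → ℝ) :
    Function.IsFixedPt (syncMap (Bᵀ * M * (B * diagonal a)) (Bᵀ *ᵥ (M *ᵥ ω))) (Bᵀ *ᵥ x) ↔
      ω = (B * diagonal a) *ᵥ fun e => Real.sin ((Bᵀ *ᵥ x) e) := by
  set s : E → ℝ := fun e => Real.sin ((Bᵀ *ᵥ x) e)
  set u := (B * diagonal a) *ᵥ s - ω
  have hcut : (Bᵀ * M * (B * diagonal a)) *ᵥ (Bᵀ *ᵥ x) = Bᵀ *ᵥ x := by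
    rw [mulVec_mulVec, cutProjection_mul_transpose ha hM1]
  have hfix : Function.IsFixedPt (syncMap (Bᵀ * M * (B * diagonal a)) (Bᵀ *ᵥ (M *ᵥ ω)))
      (Bᵀ *ᵥ x) ↔ Bᵀ *ᵥ (M *ᵥ u) = 0 := by
    rw [Function.IsFixedPt, syncMap, mulVec_sub, hcut, ← sub_eq_zero,
      show ∀ X Y Z : E → ℝ, X - Y + Z - X = -(Y - Z) from fun _ _ _ => by abel, neg_eq_zero]
    simp only [u, s, mulVec_sub, mulVec_mulVec, Matrix.mul_assoc]
  rw [hfix]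
  constructor
  · intro hu
    have hsum : ∑ i, u i = 0 := by
      simp [u, Finset.sum_sub_distrib, ← mulVec_mulVec, sum_mulVec_eq_zero hconn, hω]
    -- `u` has zero sum, so `L M u = u`; but `L M u = B 𝒜 (Bᵀ M u) = 0`
    obtain ⟨z, hz⟩ := exists_laplacian_mulVec_eq hconn ha hsum
    have hLMu : (B * diagonal a * Bᵀ) *ᵥ (M *ᵥ u) = u := by
      rw [← hz, mulVec_mulVec, mulVec_mulVec, hM1]
    rw [eq_comm, ← sub_eq_zero]
    change u = 0
    rw [← hLMu, ← mulVec_mulVec, hu, mulVec_zero]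
  · intro hω'
    rw [show u = 0 from sub_eq_zero.2 hω'.symm, mulVec_zero, mulVec_zero]

end FixedPoints

theorem sync_manifold_existence_uniqueness_general
    {n m : ℕ}
    (B : Matrix (Fin n) (Fin m) ℝ)
    (hconn : ∀ x : Fin n → ℝ, B.transpose.mulVec x = 0 ↔ ∃ c : ℝ, x = fun _ => c)
    (a : Fin m → ℝ) (ha : ∀ e, 0 < a e)
    (M : Matrix (Fin n) (Fin n) ℝ)
    (hM1 : (B * Matrix.diagonal a * B.transpose) * M * (B * Matrix.diagonal a * B.transpose)
        = B * Matrix.diagonal a * B.transpose)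
    (ω : Fin n → ℝ) (hω : ∑ i, ω i = 0)
    (y : ℝ) (hy0 : 0 ≤ y) :
    let Pcut : Matrix (Fin m) (Fin m) ℝ := B.transpose * M * (B * Matrix.diagonal a)
    let Pcyc : Matrix (Fin m) (Fin m) ℝ := 1 - Pcut
    ‖B.transpose.mulVec (M.mulVec ω)‖ < hfun (matInfNorm Pcyc) →
    hfun y = ‖B.transpose.mulVec (M.mulVec ω)‖ →
    Real.arccos (y / (y + 1)) ∈ Set.Ico 0 (Real.pi / 2) ∧
    ∃! xstar : Fin n → ℝ,
      (∑ i, xstar i = 0) ∧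
      ‖B.transpose.mulVec xstar‖ ≤ Real.arccos (y / (y + 1)) ∧
      ω = (B * Matrix.diagonal a).mulVec (fun e => Real.sin (B.transpose.mulVec xstar e)) := by
  intro Pcut Pcyc htest hy
  have hρy : matInfNorm Pcyc < y :=
    (hfun_strictAntiOn.lt_iff_gt hy0 (matInfNorm_nonneg Pcyc)).1 (hy ▸ htest)
  have hy_pos : 0 < y := (matInfNorm_nonneg Pcyc).trans_lt hρy
  refine ⟨⟨Real.arccos_nonneg _, Real.arccos_lt_pi_div_two.2 (by positivity)⟩, ?_⟩
  obtain ⟨ψ, ⟨hψγ, hψ⟩, hψ_unique⟩ := existsUnique_isFixedPt_syncMap Pcut _ hρy hy.ge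
  obtain ⟨x, hx, rfl⟩ := exists_sum_eq_zero_of_isFixedPt_syncMap hconn hψ
  refine ⟨x, ⟨hx, mem_closedBall_zero_iff.1 hψγ, (isFixedPt_syncMap_iff hconn ha hM1 hω x).1 hψ⟩,
    fun x' ⟨hx', hx'γ, hx'ω⟩ => eq_of_transpose_mulVec_eq hconn hx' hx <| hψ_unique _
      ⟨mem_closedBall_zero_iff.2 hx'γ, (isFixedPt_syncMap_iff hconn ha hM1 hω x').2 hx'ω⟩⟩

/-- Let `ω ⊥ 1ₙ` satisfy the synchronization test
`‖BᵀL†ω‖∞ < h(‖P_cyc‖∞)`; let `y = h⁻¹(‖BᵀL†ω‖∞)` and `γ* = arccos(y/(y+1)) ∈ [0, π/2)`.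
Then there exists a unique `x* ⊥ 1ₙ` with `‖Bᵀx*‖∞ ≤ γ*` satisfying the
synchronization equation `ω = B𝒜 sin(Bᵀx*)`. -/
theorem sync_manifold_existence_uniqueness
    {n m : ℕ} (hn : 2 ≤ n)
    (B : Matrix (Fin n) (Fin m) ℝ)
    (hB : ∀ e : Fin m, ∃ i j : Fin n, i ≠ j ∧ B i e = 1 ∧ B j e = -1 ∧
      ∀ k : Fin n, k ≠ i → k ≠ j → B k e = 0)
    (hconn : ∀ x : Fin n → ℝ, B.transpose.mulVec x = 0 ↔ ∃ c : ℝ, x = fun _ => c)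
    (a : Fin m → ℝ) (ha : ∀ e, 0 < a e)
    (M : Matrix (Fin n) (Fin n) ℝ)
    (hM1 : (B * Matrix.diagonal a * B.transpose) * M * (B * Matrix.diagonal a * B.transpose)
        = B * Matrix.diagonal a * B.transpose)
    (hM2 : M * (B * Matrix.diagonal a * B.transpose) * M = M)
    (hM3 : (M * (B * Matrix.diagonal a * B.transpose))ᵀ = M * (B * Matrix.diagonal a * B.transpose))
    (hM4 : ((B * Matrix.diagonal a * B.transpose) * M)ᵀ = (B * Matrix.diagonal a * B.transpose) * M)
    (ω : Fin n → ℝ) (hω : ∑ i, ω i = 0)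
    (y : ℝ) (hy0 : 0 ≤ y) :
    let Pcut : Matrix (Fin m) (Fin m) ℝ := B.transpose * M * (B * Matrix.diagonal a)
    let Pcyc : Matrix (Fin m) (Fin m) ℝ := 1 - Pcut
    ‖B.transpose.mulVec (M.mulVec ω)‖ < hfun (matInfNorm Pcyc) →
    hfun y = ‖B.transpose.mulVec (M.mulVec ω)‖ →
    Real.arccos (y / (y + 1)) ∈ Set.Ico 0 (Real.pi / 2) ∧
    ∃! xstar : Fin n → ℝ,
      (∑ i, xstar i = 0) ∧
      ‖B.transpose.mulVec xstar‖ ≤ Real.arccos (y / (y + 1)) ∧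
      ω = (B * Matrix.diagonal a).mulVec (fun e => Real.sin (B.transpose.mulVec xstar e)) :=
  sync_manifold_existence_uniqueness_general B hconn a ha M hM1 ω hω y hy0
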